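/- arXiv:2012.04440 — 2 statements merged into one kernel-verified Lean document; each statement's English description precedes it below -/
import Mathlib

section
/- Fix a nonzero $f_0 \in \mathcal{S}(\mathbb{R})$ supported in $[3/4,1]$, set $N_n = 2^n - 1$ and $f_n = f_0(\cdot - N_n)$ for $n \ge 0$, and define $g_N = \mathcal{F}^{-1}\big(\sum_{n=0}^N e^{-iN_n \cdot} f_n\big)$. Then $\|g_N\|_1 \le (N+1)\|\mathcal{F}^{-1}(f_0)\|_1$ and $\sup_{N\ge 0} \|g_N\|_\infty < \infty$; consequently for each $1 < p < \infty$ there is a constant $K$ with $\|g_N\|_p \le K N^{1/p}$ for all $N \ge 1$. -/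
/-!
Let `ψ` be the inverse Fourier transform of `f₀`, again a Schwartz function. Modulating by
`e^{-iN_n u}` and shifting by `N_n` becomes, after inverse Fourier transform, a unimodular phase
times the translate `ψ(· - N_n)`, so `|g_N(t)| ≤ ∑_{n ≤ N} |ψ(t - N_n)|`. Integrating gives the
`L¹` bound. Since `|ψ(s)| ≲ (1 + s²)⁻¹` and the points `N_n` are `1`-separated, the sum is bounded
uniformly in `t` and `N`. Finally `‖g‖_p^p ≤ ‖g‖_∞^{p-1} ‖g‖_1`.
-/

open MeasureTheory Complex

lemma one_add_sq_ceil_le (x : ℝ) : 1 + (⌈x⌉ : ℝ) ^ 2 ≤ 3 * (1 + x ^ 2) := by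
  have h₁ := Int.le_ceil x
  have h₂ := Int.ceil_lt_add_one x
  nlinarith [sq_nonneg (x - 1)]

lemma summable_inv_one_add_sq_int : Summable fun k : ℤ => (1 + (k : ℝ) ^ 2)⁻¹ := by
  refine (Real.summable_one_div_int_pow.mpr one_lt_two).of_norm_bounded_eventually ?_
  filter_upwards [(Set.finite_singleton (0 : ℤ)).compl_mem_cofinite] with k hk
  have hk : (k : ℝ) ≠ 0 := by simpa using hk
  rw [Real.norm_of_nonneg (by positivity), one_div]
  exact inv_anti₀ (by positivity) (by linarith)

lemma sum_inv_one_add_sq_sub_le {ι : Type*} [LinearOrder ι] {a : ι → ℝ}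
    (ha : ∀ m n, m < n → a m + 1 ≤ a n) (t : ℝ) (s : Finset ι) :
    ∑ n ∈ s, (1 + (t - a n) ^ 2)⁻¹ ≤ 3 * ∑' k : ℤ, (1 + (k : ℝ) ^ 2)⁻¹ := by
  -- the ceilings `⌈a n - t⌉` are distinct integers, each within `1` of `a n - t`
  set φ : ι → ℤ := fun n => ⌈a n - t⌉
  have hφ : StrictMono φ := fun m n hmn => by
    have := ha m n hmn
    have : (φ m : ℝ) < φ n := by
      linarith [Int.ceil_lt_add_one (a m - t), Int.le_ceil (a n - t)]
    exact_mod_cast this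
  calc ∑ n ∈ s, (1 + (t - a n) ^ 2)⁻¹ ≤ ∑ n ∈ s, 3 * (1 + (φ n : ℝ) ^ 2)⁻¹ := by
        gcongr with n
        calc (1 + (t - a n) ^ 2)⁻¹ ≤ ((1 + (φ n : ℝ) ^ 2) / 3)⁻¹ := by
              refine inv_anti₀ (by positivity) ?_
              rw [← neg_sub, neg_sq]
              linarith [one_add_sq_ceil_le (a n - t)]
          _ = 3 * (1 + (φ n : ℝ) ^ 2)⁻¹ := by rw [inv_div, div_eq_mul_inv]
    _ = 3 * ∑ k ∈ s.map ⟨φ, hφ.injective⟩, (1 + (k : ℝ) ^ 2)⁻¹ := by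
        rw [Finset.sum_map, Finset.mul_sum]; rfl
    _ ≤ 3 * ∑' k : ℤ, (1 + (k : ℝ) ^ 2)⁻¹ := by
        gcongr
        exact summable_inv_one_add_sq_int.sum_le_tsum _ fun k _ => by positivity

lemma SchwartzMap.exists_norm_le_mul_inv_one_add_sq {F : Type*} [NormedAddCommGroup F]
    [NormedSpace ℝ F] (f : SchwartzMap ℝ F) : ∃ C, 0 ≤ C ∧ ∀ x, ‖f x‖ ≤ C * (1 + x ^ 2)⁻¹ := by
  obtain ⟨C₀, hC₀, h₀⟩ := f.decay 0 0
  obtain ⟨C₂, hC₂, h₂⟩ := f.decay 2 0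
  refine ⟨C₀ + C₂, by positivity, fun x => ?_⟩
  specialize h₀ x
  specialize h₂ x
  simp only [norm_iteratedFDeriv_zero, pow_zero, one_mul, Real.norm_eq_abs, sq_abs] at h₀ h₂
  rw [← div_eq_mul_inv, le_div_iff₀ (by positivity)]
  linarith

lemma SchwartzMap.exists_sum_norm_comp_sub_le {F : Type*} [NormedAddCommGroup F]
    [NormedSpace ℝ F] (ψ : SchwartzMap ℝ F) {ι : Type*} [LinearOrder ι] {a : ι → ℝ}
    (ha : ∀ m n, m < n → a m + 1 ≤ a n) :
    ∃ M, ∀ t (s : Finset ι), ∑ n ∈ s, ‖ψ (t - a n)‖ ≤ M := by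
  obtain ⟨C, hC, hψ⟩ := ψ.exists_norm_le_mul_inv_one_add_sq
  refine ⟨C * (3 * ∑' k : ℤ, (1 + (k : ℝ) ^ 2)⁻¹), fun t s => ?_⟩
  calc ∑ n ∈ s, ‖ψ (t - a n)‖ ≤ ∑ n ∈ s, C * (1 + (t - a n) ^ 2)⁻¹ :=
        Finset.sum_le_sum fun n _ => hψ _
    _ ≤ C * (3 * ∑' k : ℤ, (1 + (k : ℝ) ^ 2)⁻¹) := by
        rw [← Finset.mul_sum]
        exact mul_le_mul_of_nonneg_left (sum_inv_one_add_sq_sub_le ha t s) hC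

lemma toReal_eLpNorm_le_of_norm_le {α E : Type*} [MeasurableSpace α] [NormedAddCommGroup E]
    {μ : Measure α} {f : α → E} {p M : ℝ} (hp : 1 ≤ p) (hM₀ : 0 ≤ M) (hM : ∀ x, ‖f x‖ ≤ M)
    (hf : Integrable f μ) :
    (eLpNorm f (ENNReal.ofReal p) μ).toReal ≤ (M ^ (p - 1) * ∫ x, ‖f x‖ ∂μ) ^ (1 / p) := by
  have hp₀ : 0 < p := by linarith
  have hpow : ∀ x, ‖f x‖ ^ p ≤ M ^ (p - 1) * ‖f x‖ := fun x => by
    calc ‖f x‖ ^ p = ‖f x‖ ^ (p - 1) * ‖f x‖ := by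
          rw [← Real.rpow_add_one' (norm_nonneg _) (by linarith), sub_add_cancel]
      _ ≤ M ^ (p - 1) * ‖f x‖ := by gcongr; exact hM x
  have hlint : ∫⁻ x, ‖f x‖ₑ ^ p ∂μ ≤ ENNReal.ofReal (M ^ (p - 1) * ∫ x, ‖f x‖ ∂μ) := by
    rw [← integral_const_mul, ofReal_integral_eq_lintegral_ofReal (hf.norm.const_mul _)
      (Filter.Eventually.of_forall fun x => by positivity)]
    refine lintegral_mono fun x => ?_
    rw [← ofReal_norm, ENNReal.ofReal_rpow_of_nonneg (norm_nonneg _) hp₀.le]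
    exact ENNReal.ofReal_le_ofReal (hpow x)
  rw [eLpNorm_eq_lintegral_rpow_enorm_toReal (by simpa using hp₀) ENNReal.ofReal_ne_top,
    ENNReal.toReal_ofReal hp₀.le, ← ENNReal.toReal_rpow]
  gcongr
  exact ENNReal.toReal_le_of_le_ofReal (by positivity) hlint

/-- The inverse Fourier transform in the angular-frequency normalisation of the paper; in
Mathlib's normalisation it is `t ↦ (2π)⁻¹ 𝓕⁻ f (t / 2π)`. -/
noncomputable def fourierInvAngular (f : ℝ → ℂ) (t : ℝ) : ℂ :=
  (1 / (2 * (Real.pi : ℂ))) * ∫ u : ℝ, f u * exp (I * t * u)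

lemma fourierInvAngular_finsetSum {ι : Type*} (s : Finset ι) {f : ι → ℝ → ℂ}
    (hf : ∀ i ∈ s, Integrable (f i)) (t : ℝ) :
    fourierInvAngular (fun u => ∑ i ∈ s, f i u) t = ∑ i ∈ s, fourierInvAngular (f i) t := by
  have hint : ∀ i ∈ s, Integrable fun u => f i u * exp (I * t * u) := fun i hi =>
    (hf i hi).mul_bdd (c := 1) (by fun_prop)
      (Filter.Eventually.of_forall fun u => by simp [Complex.norm_exp])
  simp only [fourierInvAngular, Finset.sum_mul, integral_finsetSum s hint, Finset.mul_sum]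

lemma fourierInvAngular_exp_mul_comp_sub (f : ℝ → ℂ) (a t : ℝ) :
    fourierInvAngular (fun u => exp (-(I * a * u)) * f (u - a)) t =
      exp (((t - a) * a : ℝ) * I) * fourierInvAngular f (t - a) := by
  have hphase : ∀ u : ℝ, exp (-(I * a * ↑(u + a))) * f (u + a - a) * exp (I * t * ↑(u + a)) =
      exp (((t - a) * a : ℝ) * I) * (f u * exp (I * ↑(t - a) * u)) := fun u => by
    rw [add_sub_cancel_right, mul_comm _ (f u), mul_left_comm, mul_assoc, ← exp_add,
      ← exp_add]
    push_cast
    ring_nf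
  unfold fourierInvAngular
  rw [← integral_add_right_eq_self (μ := volume)
    (fun u : ℝ => exp (-(I * a * u)) * f (u - a) * exp (I * t * u)) a]
  simp only [hphase, integral_const_mul]
  ring

lemma fourierInvAngular_sum_exp_mul_comp_sub {f : ℝ → ℂ} (hf : Integrable f) {ι : Type*}
    (s : Finset ι) (a : ι → ℝ) (t : ℝ) :
    fourierInvAngular (fun u => ∑ n ∈ s, exp (-(I * a n * u)) * f (u - a n)) t =
      ∑ n ∈ s, exp (((t - a n) * a n : ℝ) * I) * fourierInvAngular f (t - a n) := by
  have hmod : ∀ n ∈ s, Integrable fun u : ℝ => exp (-(I * a n * u)) * f (u - a n) := fun n _ =>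
    (hf.comp_sub_right (a n)).bdd_mul (c := 1) (by fun_prop)
      (Filter.Eventually.of_forall fun u => by simp [Complex.norm_exp])
  simp only [fourierInvAngular_finsetSum s hmod, fourierInvAngular_exp_mul_comp_sub]

lemma norm_sum_exp_mul_comp_sub_le {F : Type*} [NormedAddCommGroup F] [NormedSpace ℂ F]
    (ψ : ℝ → F) {ι : Type*} (s : Finset ι) (a : ι → ℝ) (t : ℝ) :
    ‖∑ n ∈ s, exp (((t - a n) * a n : ℝ) * I) • ψ (t - a n)‖ ≤ ∑ n ∈ s, ‖ψ (t - a n)‖ := by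
  refine (norm_sum_le _ _).trans_eq (Finset.sum_congr rfl fun n _ => ?_)
  rw [norm_smul, norm_exp_ofReal_mul_I, one_mul]

lemma exists_schwartzMap_eq_fourierInvAngular (f : SchwartzMap ℝ ℂ) :
    ∃ ψ : SchwartzMap ℝ ℂ, fourierInvAngular f = ψ := by
  have h2π : (2 * Real.pi)⁻¹ ≠ 0 := by positivity
  refine ⟨(1 / (2 * (Real.pi : ℂ))) • SchwartzMap.compCLMOfContinuousLinearEquiv ℂ
    (ContinuousLinearEquiv.unitsEquivAut ℝ (Units.mk0 _ h2π)) (FourierTransformInv.fourierInv f),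
    funext fun t => ?_⟩
  simp only [fourierInvAngular, smul_apply, SchwartzMap.compCLMOfContinuousLinearEquiv_apply,
    Function.comp_apply, ContinuousLinearEquiv.unitsEquivAut_apply, Units.val_mk0,
    SchwartzMap.fourierInv_coe, Real.fourierInv_eq', smul_eq_mul]
  congr 1
  refine integral_congr_ae (Filter.Eventually.of_forall fun u => ?_)
  rw [mul_comm]
  simp only [RCLike.inner_apply, conj_trivial]
  push_cast
  field_simp

lemma two_pow_sub_one_add_one_le {m n : ℕ} (h : m < n) : ((2 : ℝ) ^ m - 1) + 1 ≤ 2 ^ n - 1 := by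
  have h₁ : (2 : ℝ) ^ (m + 1) ≤ 2 ^ n := pow_le_pow_right₀ one_le_two h
  have h₂ : (1 : ℝ) ≤ 2 ^ m := one_le_pow₀ one_le_two
  rw [pow_succ] at h₁
  linarith

lemma MeasureTheory.Integrable.sum_norm_comp_sub {F : Type*} [NormedAddCommGroup F] {ψ : ℝ → F}
    (hψ : Integrable ψ) {ι : Type*} (s : Finset ι) (a : ι → ℝ) :
    Integrable fun t => ∑ n ∈ s, ‖ψ (t - a n)‖ :=
  integrable_finsetSum s fun n _ => (hψ.comp_sub_right (a n)).norm

lemma integral_norm_le_card_mul_of_norm_le_sum {E F : Type*} [NormedAddCommGroup E]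
    [NormedAddCommGroup F] {h : ℝ → E} {ψ : ℝ → F} (hψ : Integrable ψ) {ι : Type*}
    (s : Finset ι) (a : ι → ℝ) (hle : ∀ t, ‖h t‖ ≤ ∑ n ∈ s, ‖ψ (t - a n)‖) :
    ∫ t, ‖h t‖ ≤ s.card * ∫ t, ‖ψ t‖ := by
  calc ∫ t, ‖h t‖ ≤ ∫ t, ∑ n ∈ s, ‖ψ (t - a n)‖ :=
        integral_mono_of_nonneg (Filter.Eventually.of_forall fun t => norm_nonneg _)
          (hψ.sum_norm_comp_sub s a) (Filter.Eventually.of_forall hle)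
    _ = s.card * ∫ t, ‖ψ t‖ := by
        rw [integral_finsetSum s fun n _ => (hψ.comp_sub_right (a n)).norm]
        simp [integral_sub_right_eq_self (fun t => ‖ψ t‖)]

theorem stmt17_general (f₀ : SchwartzMap ℝ ℂ)
    (g : ℕ → ℝ → ℂ)
    (hg : ∀ (N : ℕ) (t : ℝ),
      g N t = (1 / (2 * (Real.pi : ℂ))) *
        ∫ u : ℝ,
          (∑ n ∈ Finset.range (N + 1),
            Complex.exp (-(Complex.I * (((2 : ℝ) ^ n - 1 : ℝ) : ℂ) * u)) *
              f₀ (u - ((2 : ℝ) ^ n - 1))) * Complex.exp (Complex.I * t * u))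
    (g₀ : ℝ → ℂ)
    (hg₀ : ∀ t : ℝ,
      g₀ t = (1 / (2 * (Real.pi : ℂ))) * ∫ u : ℝ, f₀ u * Complex.exp (Complex.I * t * u)) :
    (∀ N : ℕ, (∫ t : ℝ, ‖g N t‖) ≤ (N + 1) * ∫ t : ℝ, ‖g₀ t‖) ∧
    (∃ M : ℝ, ∀ (N : ℕ) (t : ℝ), ‖g N t‖ ≤ M) ∧
    (∀ p : ℝ, 1 < p →
      ∃ K : ℝ, ∀ N : ℕ, 1 ≤ N →
        (eLpNorm (g N) (ENNReal.ofReal p) volume).toReal ≤ K * (N : ℝ) ^ (1 / p)) := by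
  set a : ℕ → ℝ := fun n => 2 ^ n - 1
  obtain ⟨ψ, hψ⟩ := exists_schwartzMap_eq_fourierInvAngular f₀
  have hg₀ψ : ∀ t, g₀ t = ψ t := fun t => (hg₀ t).trans (congrFun hψ t)
  have hgψ : ∀ N t, g N t =
      ∑ n ∈ Finset.range (N + 1), exp (((t - a n) * a n : ℝ) * I) * ψ (t - a n) := fun N t => by
    rw [hg N t, ← fourierInvAngular, fourierInvAngular_sum_exp_mul_comp_sub f₀.integrable, hψ]
  obtain ⟨M, hM⟩ := ψ.exists_sum_norm_comp_sub_le fun m n => two_pow_sub_one_add_one_le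
  have hM₀ : 0 ≤ M := by simpa using hM 0 ∅
  have hle : ∀ N t, ‖g N t‖ ≤ ∑ n ∈ Finset.range (N + 1), ‖ψ (t - a n)‖ := fun N t => by
    rw [hgψ]
    exact norm_sum_exp_mul_comp_sub_le ψ _ a t
  have hint : ∀ N, Integrable (g N) := fun N => by
    refine (ψ.integrable.sum_norm_comp_sub _ a).mono' ?_ (Filter.Eventually.of_forall (hle N))
    rw [funext (hgψ N)]
    exact (by fun_prop : Continuous _).aestronglyMeasurable
  have hL1 : ∀ N : ℕ, ∫ t, ‖g N t‖ ≤ (N + 1) * ∫ t, ‖g₀ t‖ := fun N => by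
    simpa [hg₀ψ] using integral_norm_le_card_mul_of_norm_le_sum ψ.integrable _ a (hle N)
  refine ⟨hL1, ⟨M, fun N t => (hle N t).trans (hM t _)⟩, fun p hp =>
    ⟨(M ^ (p - 1) * (2 * ∫ t, ‖g₀ t‖)) ^ (1 / p), fun N hN => ?_⟩⟩
  have hN : (1 : ℝ) ≤ N := by exact_mod_cast hN
  have hC : 0 ≤ ∫ t, ‖g₀ t‖ := integral_nonneg fun t => norm_nonneg _
  calc (eLpNorm (g N) (ENNReal.ofReal p) volume).toReal
      ≤ (M ^ (p - 1) * ∫ t, ‖g N t‖) ^ (1 / p) :=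
        toReal_eLpNorm_le_of_norm_le hp.le hM₀ (fun t => (hle N t).trans (hM t _)) (hint N)
    _ ≤ (M ^ (p - 1) * (2 * ∫ t, ‖g₀ t‖) * N) ^ (1 / p) := by
        rw [mul_assoc]
        gcongr
        nlinarith [hL1 N]
    _ = (M ^ (p - 1) * (2 * ∫ t, ‖g₀ t‖)) ^ (1 / p) * (N : ℝ) ^ (1 / p) :=
        Real.mul_rpow (by positivity) (Nat.cast_nonneg N)

/-- Lemma 5.5 (construction): fix a nonzero `f₀ ∈ 𝒮(ℝ)` supported in `[3/4, 1]`, set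
`N_n = 2ⁿ - 1`, `f_n = f₀(· - N_n)` and
`g_N = 𝓕⁻¹(∑_{n=0}^N e^{-iN_n ·} f_n)`.  Then `‖g_N‖₁ ≤ (N+1) ‖𝓕⁻¹(f₀)‖₁`,
`sup_N ‖g_N‖_∞ < ∞`, and for each `1 < p < ∞` there is `K` with
`‖g_N‖_p ≤ K N^{1/p}` for `N ≥ 1`. -/
theorem stmt17 (f₀ : SchwartzMap ℝ ℂ) (hne : f₀ ≠ 0)
    (hsupp : tsupport (fun t => f₀ t) ⊆ Set.Icc (3 / 4 : ℝ) 1)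
    (g : ℕ → ℝ → ℂ)
    (hg : ∀ (N : ℕ) (t : ℝ),
      g N t = (1 / (2 * (Real.pi : ℂ))) *
        ∫ u : ℝ,
          (∑ n ∈ Finset.range (N + 1),
            Complex.exp (-(Complex.I * (((2 : ℝ) ^ n - 1 : ℝ) : ℂ) * u)) *
              f₀ (u - ((2 : ℝ) ^ n - 1))) * Complex.exp (Complex.I * t * u))
    (g₀ : ℝ → ℂ)
    (hg₀ : ∀ t : ℝ,
      g₀ t = (1 / (2 * (Real.pi : ℂ))) * ∫ u : ℝ, f₀ u * Complex.exp (Complex.I * t * u)) :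
    (∀ N : ℕ, (∫ t : ℝ, ‖g N t‖) ≤ (N + 1) * ∫ t : ℝ, ‖g₀ t‖) ∧
    (∃ M : ℝ, ∀ (N : ℕ) (t : ℝ), ‖g N t‖ ≤ M) ∧
    (∀ p : ℝ, 1 < p →
      ∃ K : ℝ, ∀ N : ℕ, 1 ≤ N →
        (eLpNorm (g N) (ENNReal.ofReal p) volume).toReal ≤ K * (N : ℝ) ^ (1 / p)) :=
  stmt17_general f₀ g hg g₀ hg₀
end

section
/- Let $X$ be a Banach space and $-A$ the generator of a bounded $C_0$-semigroup $(T_t)_{t\ge 0}$ on $X$. Then for every $b \in L^1(\mathbb{R}_+)$ and every $\varepsilon > 0$, the operator $L_b(A + \varepsilon)$ defined by the half-plane holomorphic functional calculus equals the Hille–Phillips operator $\Gamma(A+\varepsilon, b) = \int_0^\infty b(t) e^{-\varepsilon t} T_t\, dt$. -/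
/-!
Both sides reduce to `∫ u, b(u) e^{-εu} ∫ τ, τ e^{-(1+ε)τ} T_{τ+u} x dτ du`, the Hille–Phillips
operator of `b` convolved with `τ e^{-τ}`, which is the inverse Laplace transform of the
regularizer `(1 + z)⁻²`.

On the calculus side, expand `L_b` and the resolvent into Laplace integrals and apply Fubini twice;
what remains is an integral over the line `Re z = β`, which is Fourier inversion for
`τ₊ e^{-(1+β)τ}`, whose Fourier transform is `(1 + β + 2πiw)⁻²`.

On the semigroup side, the semigroup law turns `R(-1, A+ε)²` into
`∫∫ e^{-(1+ε)(r+r')} T_{r+r'} dr dr' = ∫ ρ e^{-(1+ε)ρ} T_ρ dρ`, and one more Fubini moves `Γ`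
inside.
-/

open MeasureTheory Complex Set Real FourierTransform

lemma setIntegral_Ioi_eq_setIntegral_Ioi_zero_add {E : Type*} [NormedAddCommGroup E]
    [NormedSpace ℝ E] (f : ℝ → E) (u : ℝ) :
    ∫ t in Ioi u, f t = ∫ τ in Ioi (0 : ℝ), f (τ + u) := by
  have := (measurePreserving_add_right volume u).setIntegral_preimage_emb
    (measurableEmbedding_addRight u) f (Ioi u)
  simp only [preimage_add_const_Ioi, sub_self] at this
  exact this.symm

lemma ContinuousOn.aestronglyMeasurable_restrict_Ioi {E : Type*} [NormedAddCommGroup E]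
    {F : ℝ → E} (hF : ContinuousOn F (Ici 0)) : AEStronglyMeasurable F (volume.restrict (Ioi 0)) :=
  (hF.mono Ioi_subset_Ici_self).aestronglyMeasurable measurableSet_Ioi

lemma integrableOn_Ioi_ofReal_mul_cexp {c : ℂ} (hc : c.re < 0) :
    IntegrableOn (fun t : ℝ => (t : ℂ) * cexp (c * t)) (Ioi 0) := by
  have hreal : IntegrableOn (fun t : ℝ => t * Real.exp (-(-c.re) * t)) (Ioi 0) := by
    simpa using integrableOn_rpow_mul_exp_neg_mul_rpow (s := 1) (p := 1) (by norm_num) one_pos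
      (neg_pos.2 hc)
  refine hreal.mono' (by fun_prop) ?_
  filter_upwards [ae_restrict_mem measurableSet_Ioi] with t ht
  rw [norm_mul, Complex.norm_exp, norm_real, Real.norm_of_nonneg (le_of_lt ht)]
  simp

lemma integral_integral_swap_of_norm_le_mul {α β E : Type*} [MeasurableSpace α]
    [MeasurableSpace β] [NormedAddCommGroup E] [NormedSpace ℝ E] {μ : Measure α}
    {ν : Measure β} [SFinite μ] [SFinite ν] {f : α → β → E}
    (hf : AEStronglyMeasurable (Function.uncurry f) (μ.prod ν)) {κ : α → ℝ} {φ : β → ℝ}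
    (hκ : Integrable κ μ) (hφ : Integrable φ ν)
    (hbound : ∀ᵐ p ∂μ.prod ν, ‖f p.1 p.2‖ ≤ κ p.1 * φ p.2) :
    ∫ a, ∫ b, f a b ∂ν ∂μ = ∫ b, ∫ a, f a b ∂μ ∂ν :=
  integral_integral_swap ((hκ.mul_prod hφ).mono' hf hbound)

lemma indicator_Ioi_apply_eq_indicator_Iio {M : Type*} [Zero M] (g : ℝ → M) (r ρ : ℝ) :
    (Ioi r).indicator g ρ = (Iio ρ).indicator (fun _ => g ρ) r := by
  simp [indicator]

section Convolution

variable {E : Type*} [NormedAddCommGroup E] [NormedSpace ℝ E]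

lemma setIntegral_Ioi_indicator_Iio_const [CompleteSpace E] {ρ : ℝ} (hρ : 0 ≤ ρ) (v : E) :
    ∫ r in Ioi (0 : ℝ), (Iio ρ).indicator (fun _ => v) r = ρ • v := by
  rw [setIntegral_indicator measurableSet_Iio, Ioi_inter_Iio, setIntegral_const,
    Real.volume_real_Ioo_of_le hρ, sub_zero]

lemma integrable_indicator_Ioi_fst {g : ℝ → E}
    (hg : AEStronglyMeasurable g (volume.restrict (Ioi 0)))
    (hg' : IntegrableOn (fun ρ => ρ • g ρ) (Ioi 0)) :
    Integrable (fun p : ℝ × ℝ => (Ioi p.1).indicator g p.2)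
      ((volume.restrict (Ioi 0)).prod (volume.restrict (Ioi 0))) := by
  have hmeas : AEStronglyMeasurable (fun p : ℝ × ℝ => (Ioi p.1).indicator g p.2)
      ((volume.restrict (Ioi 0)).prod (volume.restrict (Ioi 0))) :=
    (hg.comp_snd.indicator (measurableSet_lt measurable_fst measurable_snd)).congr
      (ae_of_all _ fun p => by simp [indicator])
  simp_rw [integrable_prod_iff' hmeas, indicator_Ioi_apply_eq_indicator_Iio g,
    norm_indicator_eq_indicator_norm]
  refine ⟨ae_of_all _ fun ρ => ?_, hg'.norm.congr ?_⟩
  · rw [integrable_indicator_iff measurableSet_Iio]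
    refine integrableOn_const ?_
    rw [Measure.restrict_apply measurableSet_Iio, Iio_inter_Ioi]
    exact measure_Ioo_lt_top.ne
  · filter_upwards [ae_restrict_mem measurableSet_Ioi] with ρ hρ
    rw [setIntegral_Ioi_indicator_Iio_const (le_of_lt hρ), norm_smul, smul_eq_mul,
      Real.norm_of_nonneg (le_of_lt hρ)]

lemma integral_Ioi_integral_Ioi_comp_add [CompleteSpace E] {g : ℝ → E}
    (hg : AEStronglyMeasurable g (volume.restrict (Ioi 0)))
    (hg' : IntegrableOn (fun ρ => ρ • g ρ) (Ioi 0)) :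
    ∫ r in Ioi (0 : ℝ), ∫ r' in Ioi (0 : ℝ), g (r + r') = ∫ ρ in Ioi (0 : ℝ), ρ • g ρ := by
  have hinner : ∀ r ∈ Ioi (0 : ℝ),
      ∫ r' in Ioi (0 : ℝ), g (r + r') = ∫ ρ in Ioi (0 : ℝ), (Ioi r).indicator g ρ := by
    intro r hr
    rw [setIntegral_indicator measurableSet_Ioi,
      inter_eq_self_of_subset_right (Ioi_subset_Ioi (le_of_lt hr)),
      setIntegral_Ioi_eq_setIntegral_Ioi_zero_add g r]
    simp_rw [add_comm r]
  rw [setIntegral_congr_fun measurableSet_Ioi hinner,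
    integral_integral_swap (integrable_indicator_Ioi_fst hg hg')]
  refine setIntegral_congr_fun measurableSet_Ioi fun ρ hρ => ?_
  simp_rw [indicator_Ioi_apply_eq_indicator_Iio g _ ρ]
  exact setIntegral_Ioi_indicator_Iio_const (le_of_lt hρ) _

end Convolution

lemma integral_Ioi_ofReal_mul_cexp {c : ℂ} (hc : c.re < 0) :
    ∫ t in Ioi (0 : ℝ), (t : ℂ) * cexp (c * t) = (c⁻¹) ^ 2 := by
  have hconv := integral_Ioi_integral_Ioi_comp_add (g := fun t : ℝ => cexp (c * t))
    (Continuous.aestronglyMeasurable (by fun_prop))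
    (by simpa only [Complex.real_smul] using integrableOn_Ioi_ofReal_mul_cexp hc)
  simp only [Complex.real_smul, ofReal_add, mul_add, Complex.exp_add, integral_const_mul,
    integral_mul_const, integral_exp_mul_complex_Ioi hc, ofReal_zero, mul_zero,
    Complex.exp_zero] at hconv
  rw [← hconv]
  ring

/-- Written with `max` rather than an indicator so that it is continuous, as pointwise Fourier
inversion requires. -/
noncomputable def rampExp (a t : ℝ) : ℂ := ((max t 0 : ℝ) : ℂ) * cexp (-(a * max t 0 : ℝ))

lemma rampExp_of_nonpos (a : ℝ) {τ : ℝ} (hτ : τ ≤ 0) : rampExp a τ = 0 := by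
  simp [rampExp, max_eq_right hτ]

lemma rampExp_of_nonneg (a : ℝ) {τ : ℝ} (hτ : 0 ≤ τ) : rampExp a τ = τ * cexp (-(a * τ)) := by
  simp [rampExp, max_eq_left hτ]

lemma rampExp_eq_indicator (a : ℝ) :
    rampExp a = (Ioi 0).indicator fun t : ℝ => (t : ℂ) * cexp (-a * t) := by
  ext t
  rcases lt_or_ge 0 t with ht | ht
  · simp [rampExp_of_nonneg a ht.le, ht]
  · simp [rampExp_of_nonpos a ht, not_lt.2 ht]

lemma continuous_rampExp (a : ℝ) : Continuous (rampExp a) := by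
  unfold rampExp; fun_prop

lemma integrable_rampExp {a : ℝ} (ha : 0 < a) : Integrable (rampExp a) := by
  rw [rampExp_eq_indicator, integrable_indicator_iff measurableSet_Ioi]
  exact integrableOn_Ioi_ofReal_mul_cexp (by simpa using ha)

lemma cexp_mul_rampExp_add (a b τ : ℝ) : cexp (b * τ) * rampExp (a + b) τ = rampExp a τ := by
  rcases le_or_gt τ 0 with hτ | hτ
  · simp [rampExp_of_nonpos _ hτ]
  · rw [rampExp_of_nonneg _ hτ.le, rampExp_of_nonneg _ hτ.le, mul_left_comm, ← Complex.exp_add]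
    push_cast
    ring_nf

lemma norm_inv_add_mul_I_sq (a y : ℝ) : ‖((a : ℂ) + y * I)⁻¹ ^ 2‖ = (a ^ 2 + y ^ 2)⁻¹ := by
  rw [norm_pow, norm_inv, inv_pow, ← normSq_eq_norm_sq, normSq_add_mul_I]

lemma integrable_inv_add_mul_I_sq {a : ℝ} (ha : a ≠ 0) :
    Integrable fun y : ℝ => ((a : ℂ) + y * I)⁻¹ ^ 2 := by
  have hcont : Continuous fun y : ℝ => ((a : ℂ) + y * I)⁻¹ ^ 2 :=
    (Continuous.inv₀ (by fun_prop) fun y h => ha (by simpa using congrArg re h)).pow 2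
  refine (integrable_norm_iff hcont.aestronglyMeasurable).1 ?_
  refine ((integrable_inv_one_add_sq.comp_div ha).const_mul (a ^ 2)⁻¹).congr
    (ae_of_all _ fun y => ?_)
  simp only [norm_inv_add_mul_I_sq]
  field_simp

lemma fourier_rampExp {a : ℝ} (ha : 0 < a) (w : ℝ) :
    𝓕 (rampExp a) w = ((a : ℂ) + (2 * π * w : ℝ) * I)⁻¹ ^ 2 := by
  rw [← neg_sq, ← inv_neg, ← integral_Ioi_ofReal_mul_cexp (by simpa using ha),
    ← integral_indicator measurableSet_Ioi, fourier_real_eq_integral_exp_smul,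
    rampExp_eq_indicator]
  congr 1 with t
  rcases lt_or_ge 0 t with ht | ht
  · simp only [indicator_of_mem (mem_Ioi.2 ht), smul_eq_mul]
    rw [mul_left_comm, ← Complex.exp_add]
    push_cast
    ring_nf
  · simp [indicator_of_notMem (notMem_Ioi.2 ht)]

lemma integral_inv_add_mul_I_sq_mul_cexp {a : ℝ} (ha : 0 < a) (τ : ℝ) :
    ∫ y : ℝ, ((a : ℂ) + y * I)⁻¹ ^ 2 * cexp (y * τ * I) = 2 * π * rampExp a τ := by
  set G : ℝ → ℂ := fun y => ((a : ℂ) + y * I)⁻¹ ^ 2 * cexp (y * τ * I)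
  have h2π : (2 * π : ℝ) ≠ 0 := by positivity
  have hFourier : Integrable (𝓕 (rampExp a)) := by
    simpa only [← fourier_rampExp ha] using
      (integrable_inv_add_mul_I_sq ha.ne').comp_mul_left' h2π
  have hinv := (integrable_rampExp ha).fourierInv_fourier_eq hFourier
    (continuous_rampExp a).continuousAt (v := τ)
  have hG : ∀ v : ℝ, cexp (↑(-2 * π * v * -τ) * I) • 𝓕 (rampExp a) v = G (2 * π * v) := by
    intro v
    simp only [G, fourier_rampExp ha, smul_eq_mul]
    push_cast
    ring_nf
  rw [fourierInv_eq_fourier_neg, fourier_real_eq_integral_exp_smul] at hinv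
  simp only [hG, Measure.integral_comp_mul_left G (2 * π), abs_inv,
    abs_of_pos (by positivity : (0 : ℝ) < 2 * π)] at hinv
  rw [← hinv, Complex.real_smul]
  push_cast
  field_simp

lemma inv_one_add_vertical_sq_eq (β s : ℝ) :
    (1 + ((β : ℂ) + I * s))⁻¹ ^ 2 = (((1 + β : ℝ) : ℂ) + s * I)⁻¹ ^ 2 := by
  push_cast; ring_nf

lemma integrable_inv_one_add_sq_vertical {β : ℝ} (hβ : -1 < β) :
    Integrable fun s : ℝ => (1 + ((β : ℂ) + I * s))⁻¹ ^ 2 := by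
  simpa only [inv_one_add_vertical_sq_eq] using integrable_inv_add_mul_I_sq (by linarith : 1 + β ≠ 0)

/-- The inverse Laplace transform of `(1 + z)⁻²`, computed along `Re z = β`. -/
lemma integral_inv_one_add_sq_vertical_mul_cexp {β : ℝ} (hβ : -1 < β) (τ : ℝ) :
    ∫ s : ℝ, (1 + ((β : ℂ) + I * s))⁻¹ ^ 2 * cexp (((β : ℂ) + I * s) * τ)
      = 2 * π * rampExp 1 τ := by
  have hsplit : ∀ s : ℝ, (1 + ((β : ℂ) + I * s))⁻¹ ^ 2 * cexp (((β : ℂ) + I * s) * τ)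
      = cexp (β * τ) * ((((1 + β : ℝ) : ℂ) + s * I)⁻¹ ^ 2 * cexp (s * τ * I)) := by
    intro s
    rw [inv_one_add_vertical_sq_eq, mul_left_comm, ← Complex.exp_add]
    ring_nf
  simp_rw [hsplit, integral_const_mul,
    integral_inv_add_mul_I_sq_mul_cexp (by linarith : 0 < 1 + β), ← cexp_mul_rampExp_add 1 β τ]
  ring

section HalfPlaneCalculus

variable {X : Type*} [NormedAddCommGroup X] [NormedSpace ℂ X]

lemma norm_cexp_neg_mul_le_one {u : ℝ} (hu : 0 < u) {β : ℝ} (hβ : 0 ≤ β) (s : ℝ) :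
    ‖cexp (-(u * ((β : ℂ) + I * s)))‖ ≤ 1 := by
  rw [Complex.norm_exp, Real.exp_le_one_iff]
  simpa using mul_nonneg hu.le hβ

lemma norm_cexp_vertical_mul (β s r : ℝ) :
    ‖cexp (((β : ℂ) + I * s) * r)‖ = Real.exp (β * r) := by
  rw [Complex.norm_exp]; simp

lemma integral_mul_laplace_smul [CompleteSpace X] {ψ : ℝ → ℂ} (hψ : Integrable ψ)
    {V : ℝ → X} (hV : AEStronglyMeasurable V) {K : ℝ} (hVK : ∀ s, ‖V s‖ ≤ K) {b : ℝ → ℂ}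
    (hb : IntegrableOn b (Ioi 0)) {β : ℝ} (hβ : 0 ≤ β) :
    ∫ s, (ψ s * ∫ u in Ioi (0 : ℝ), b u * cexp (-(u * ((β : ℂ) + I * s)))) • V s
      = ∫ u in Ioi (0 : ℝ), b u • ∫ s, (ψ s * cexp (-(u * ((β : ℂ) + I * s)))) • V s := by
  have hmeas : AEStronglyMeasurable
      (fun p : ℝ × ℝ => (ψ p.1 * (b p.2 * cexp (-(p.2 * ((β : ℂ) + I * p.1))))) • V p.1)
      (volume.prod (volume.restrict (Ioi 0))) :=
    (hψ.1.comp_fst.mul (hb.1.comp_snd.mul (Continuous.aestronglyMeasurable (by fun_prop)))).smul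
      hV.comp_fst
  have hbound : ∀ᵐ p : ℝ × ℝ ∂volume.prod (volume.restrict (Ioi 0)),
      ‖(ψ p.1 * (b p.2 * cexp (-(p.2 * ((β : ℂ) + I * p.1))))) • V p.1‖
        ≤ (‖ψ p.1‖ * K) * ‖b p.2‖ := by
    filter_upwards [Measure.quasiMeasurePreserving_snd.ae (ae_restrict_mem measurableSet_Ioi)]
      with p hp
    calc _ = ‖ψ p.1‖ * (‖b p.2‖ * ‖cexp (-(p.2 * ((β : ℂ) + I * p.1)))‖) * ‖V p.1‖ := by
          rw [norm_smul, norm_mul, norm_mul]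
      _ ≤ ‖ψ p.1‖ * (‖b p.2‖ * 1) * K := by
          gcongr
          exacts [norm_cexp_neg_mul_le_one hp hβ p.1, hVK p.1]
      _ = _ := by ring
  simp_rw [← integral_const_mul, ← integral_smul_const]
  rw [integral_integral_swap_of_norm_le_mul hmeas (hψ.norm.mul_const K) hb.norm hbound]
  refine setIntegral_congr_fun measurableSet_Ioi fun u _ => ?_
  rw [← integral_smul]
  congr 1 with s
  rw [smul_smul]
  ring_nf

lemma integral_inv_one_add_sq_mul_cexp_smul_resolvent [CompleteSpace X] {β ε : ℝ}
    (hβ : -1 < β) (hβε : β < ε) {F : ℝ → X} (hF : AEStronglyMeasurable F (volume.restrict (Ioi 0)))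
    {M : ℝ} (hFM : ∀ t > 0, ‖F t‖ ≤ M) (u : ℝ) :
    ∫ s : ℝ, ((1 + ((β : ℂ) + I * s))⁻¹ ^ 2 * cexp (-(u * ((β : ℂ) + I * s)))) •
        ∫ t in Ioi (0 : ℝ), cexp ((((β : ℂ) + I * s) - ε) * t) • F t
      = (2 * π : ℂ) • ∫ t in Ioi (0 : ℝ), (rampExp 1 (t - u) * cexp (-(ε * t))) • F t := by
  set ψ : ℝ → ℂ := fun s => (1 + ((β : ℂ) + I * s))⁻¹ ^ 2
  have hψ : Integrable ψ := integrable_inv_one_add_sq_vertical hβ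
  have hpt : ∀ s : ℝ, (ψ s * cexp (-(u * ((β : ℂ) + I * s)))) •
      ∫ t in Ioi (0 : ℝ), cexp ((((β : ℂ) + I * s) - ε) * t) • F t
      = ∫ t in Ioi (0 : ℝ), (ψ s * cexp (((β : ℂ) + I * s) * ((t - u : ℝ) : ℂ))) •
          (cexp (-(ε * t)) • F t) := by
    intro s
    rw [← integral_smul]
    congr 1 with t
    rw [smul_smul, smul_smul, mul_assoc, mul_assoc, ← Complex.exp_add, ← Complex.exp_add]
    push_cast
    ring_nf
  have hmeas : AEStronglyMeasurable (fun p : ℝ × ℝ =>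
      (ψ p.1 * cexp (((β : ℂ) + I * p.1) * ((p.2 - u : ℝ) : ℂ))) • (cexp (-(ε * p.2)) • F p.2))
      (volume.prod (volume.restrict (Ioi 0))) :=
    (hψ.1.comp_fst.mul (Continuous.aestronglyMeasurable (by fun_prop))).smul
      ((Continuous.aestronglyMeasurable (f := fun t : ℝ => cexp (-(ε * t))) (by fun_prop)).smul
        hF).comp_snd
  have hbound : ∀ᵐ p : ℝ × ℝ ∂volume.prod (volume.restrict (Ioi 0)),
      ‖(ψ p.1 * cexp (((β : ℂ) + I * p.1) * ((p.2 - u : ℝ) : ℂ))) • (cexp (-(ε * p.2)) • F p.2)‖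
        ≤ ‖ψ p.1‖ * (Real.exp ((β - ε) * p.2) * (Real.exp (-(β * u)) * M)) := by
    filter_upwards [Measure.quasiMeasurePreserving_snd.ae (ae_restrict_mem measurableSet_Ioi)]
      with p hp
    have hnorm : ‖cexp (-(ε * p.2))‖ = Real.exp (-(ε * p.2)) := by rw [Complex.norm_exp]; simp
    calc _ = ‖ψ p.1‖ * (Real.exp (β * (p.2 - u)) * Real.exp (-(ε * p.2))) * ‖F p.2‖ := by
          rw [norm_smul, norm_smul, norm_mul, norm_cexp_vertical_mul, hnorm]; ring
      _ ≤ ‖ψ p.1‖ * (Real.exp (β * (p.2 - u)) * Real.exp (-(ε * p.2))) * M := by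
          gcongr; exact hFM _ hp
      _ = _ := by
          rw [← Real.exp_add, mul_assoc, ← mul_assoc (Real.exp _), ← Real.exp_add]; ring_nf
  rw [integral_congr_ae (ae_of_all _ hpt), integral_integral_swap_of_norm_le_mul hmeas hψ.norm
    ((integrableOn_exp_mul_Ioi (by linarith) 0).mul_const _) hbound, ← integral_smul]
  refine setIntegral_congr_fun measurableSet_Ioi fun t _ => ?_
  rw [integral_smul_const, integral_inv_one_add_sq_vertical_mul_cexp hβ, smul_smul, smul_smul]
  ring_nf

lemma setIntegral_rampExp_sub_mul_cexp_smul {u : ℝ} (hu : 0 ≤ u) (ε : ℝ) (F : ℝ → X) :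
    ∫ t in Ioi (0 : ℝ), (rampExp 1 (t - u) * cexp (-(ε * t))) • F t
      = cexp (-(ε * u)) •
          ∫ τ in Ioi (0 : ℝ), ((τ : ℂ) * cexp (((-1 - ε : ℝ) : ℂ) * τ)) • F (τ + u) := by
  rw [setIntegral_eq_of_subset_of_forall_sdiff_eq_zero measurableSet_Ioi (Ioi_subset_Ioi hu)
      fun t ht => by rw [rampExp_of_nonpos 1 (sub_nonpos.2 (not_lt.1 ht.2)), zero_mul, zero_smul],
    setIntegral_Ioi_eq_setIntegral_Ioi_zero_add, ← integral_smul]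
  refine setIntegral_congr_fun measurableSet_Ioi fun τ hτ => ?_
  rw [add_sub_cancel_right, rampExp_of_nonneg 1 (le_of_lt hτ), smul_smul]
  congr 1
  have hexp : cexp (-(1 * τ : ℝ)) * cexp (-(ε * (τ + u) : ℝ))
      = cexp (-(ε * u : ℝ)) * cexp ((-1 - ε : ℝ) * τ : ℝ) := by
    rw [← Complex.exp_add, ← Complex.exp_add]; push_cast; ring_nf
  push_cast at hexp ⊢
  linear_combination (τ : ℂ) * hexp

lemma norm_setIntegral_cexp_smul_le {β ε : ℝ} (hβε : β < ε) {F : ℝ → X} {M : ℝ}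
    (hFM : ∀ t > 0, ‖F t‖ ≤ M) (s : ℝ) :
    ‖∫ t in Ioi (0 : ℝ), cexp ((((β : ℂ) + I * s) - ε) * t) • F t‖
      ≤ ∫ t in Ioi (0 : ℝ), Real.exp ((β - ε) * t) * M := by
  refine norm_integral_le_of_norm_le ((integrableOn_exp_mul_Ioi (by linarith) 0).mul_const M) ?_
  filter_upwards [ae_restrict_mem measurableSet_Ioi] with t ht
  have hre : ((((β : ℂ) + I * s) - ε) * t).re = (β - ε) * t := by simp
  rw [norm_smul, Complex.norm_exp, hre]
  gcongr
  exact hFM t ht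

lemma contour_integral_eq_iterated_integral [CompleteSpace X] {β ε : ℝ} (hβ : 0 ≤ β)
    (hβε : β < ε) {F : ℝ → X} (hF : AEStronglyMeasurable F (volume.restrict (Ioi 0))) {M : ℝ}
    (hFM : ∀ t > 0, ‖F t‖ ≤ M) {b : ℝ → ℂ} (hb : IntegrableOn b (Ioi 0)) :
    (((2 * π)⁻¹ : ℝ) : ℂ) • ∫ s : ℝ, ((1 + ((β : ℂ) + I * s))⁻¹ ^ 2 *
        ∫ u in Ioi (0 : ℝ), b u * cexp (-(u * ((β : ℂ) + I * s)))) •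
          ∫ t in Ioi (0 : ℝ), cexp ((((β : ℂ) + I * s) - ε) * t) • F t
      = ∫ u in Ioi (0 : ℝ), (b u * cexp (-(ε * u))) •
          ∫ τ in Ioi (0 : ℝ), ((τ : ℂ) * cexp (((-1 - ε : ℝ) : ℂ) * τ)) • F (τ + u) := by
  have hV : AEStronglyMeasurable
      (fun s : ℝ => ∫ t in Ioi (0 : ℝ), cexp ((((β : ℂ) + I * s) - ε) * t) • F t) :=
    ((Continuous.aestronglyMeasurable (f := fun p : ℝ × ℝ =>
      cexp ((((β : ℂ) + I * p.1) - ε) * p.2)) (by fun_prop)).smul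
        hF.comp_snd).integral_prod_right'
  rw [integral_mul_laplace_smul (integrable_inv_one_add_sq_vertical (by linarith)) hV
    (norm_setIntegral_cexp_smul_le hβε hFM) hb hβ, ← integral_smul]
  refine setIntegral_congr_fun measurableSet_Ioi fun u hu => ?_
  rw [integral_inv_one_add_sq_mul_cexp_smul_resolvent (by linarith) hβε hF hFM u,
    setIntegral_rampExp_sub_mul_cexp_smul (le_of_lt hu), smul_smul, smul_smul, smul_smul]
  congr 1
  push_cast
  field_simp

end HalfPlaneCalculus

section Semigroup

variable {X : Type*} [NormedAddCommGroup X] [NormedSpace ℂ X] {T : ℝ → X →L[ℂ] X}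

lemma setIntegral_smul_setIntegral_smul_comp_add_swap {g φ : ℝ → ℂ}
    (hg : IntegrableOn g (Ioi 0)) (hφ : IntegrableOn φ (Ioi 0)) {F : ℝ → X}
    (hF : ContinuousOn F (Ici 0)) {M : ℝ} (hFM : ∀ t, 0 ≤ t → ‖F t‖ ≤ M) :
    ∫ ρ in Ioi (0 : ℝ), g ρ • ∫ u in Ioi (0 : ℝ), φ u • F (u + ρ)
      = ∫ u in Ioi (0 : ℝ), φ u • ∫ ρ in Ioi (0 : ℝ), g ρ • F (ρ + u) := by
  have hFadd : AEStronglyMeasurable (fun p : ℝ × ℝ => F (p.2 + p.1))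
      ((volume.restrict (Ioi 0)).prod (volume.restrict (Ioi 0))) := by
    rw [Measure.prod_restrict]
    refine ContinuousOn.aestronglyMeasurable ?_ (measurableSet_Ioi.prod measurableSet_Ioi)
    exact hF.comp (by fun_prop) fun p hp => mem_Ici.2 (add_nonneg (le_of_lt hp.2) (le_of_lt hp.1))
  have hbound : ∀ᵐ p : ℝ × ℝ ∂(volume.restrict (Ioi 0)).prod (volume.restrict (Ioi 0)),
      ‖(g p.1 * φ p.2) • F (p.2 + p.1)‖ ≤ ‖g p.1‖ * (‖φ p.2‖ * M) := by
    filter_upwards [Measure.quasiMeasurePreserving_fst.ae (ae_restrict_mem measurableSet_Ioi),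
      Measure.quasiMeasurePreserving_snd.ae (ae_restrict_mem measurableSet_Ioi)] with p hp₁ hp₂
    rw [norm_smul, norm_mul, mul_assoc]
    gcongr
    exact hFM _ (add_nonneg (le_of_lt hp₂) (le_of_lt hp₁))
  simp_rw [← integral_smul, smul_smul]
  rw [integral_integral_swap_of_norm_le_mul ((hg.1.comp_fst.mul hφ.1.comp_snd).smul hFadd)
    hg.norm (hφ.norm.mul_const M) hbound]
  refine setIntegral_congr_fun measurableSet_Ioi fun u _ =>
    setIntegral_congr_fun measurableSet_Ioi fun ρ _ => ?_
  rw [mul_comm, add_comm]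

lemma apply_setIntegral_smul_eq [CompleteSpace X]
    (hTsg : ∀ s t : ℝ, 0 ≤ s → 0 ≤ t → T (s + t) = (T s).comp (T t)) {φ : ℝ → ℂ} {x : X}
    (hφ : IntegrableOn (fun t => φ t • T t x) (Ioi 0)) {ρ : ℝ} (hρ : 0 ≤ ρ) :
    T ρ (∫ t in Ioi (0 : ℝ), φ t • T t x) = ∫ t in Ioi (0 : ℝ), φ t • T (t + ρ) x := by
  rw [← ContinuousLinearMap.integral_comp_comm _ hφ]
  refine setIntegral_congr_fun measurableSet_Ioi fun t ht => ?_
  rw [map_smul, ← ContinuousLinearMap.comp_apply, ← hTsg ρ t hρ (le_of_lt ht), add_comm]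

lemma setIntegral_cexp_smul_apply_setIntegral [CompleteSpace X]
    (hTsg : ∀ s t : ℝ, 0 ≤ s → 0 ≤ t → T (s + t) = (T s).comp (T t))
    (hTcont : ∀ x : X, ContinuousOn (fun t => T t x) (Ici 0)) {C : ℝ}
    (hC : ∀ t : ℝ, 0 ≤ t → ‖T t‖ ≤ C) {c : ℂ} (hc : c.re < 0) (w : X) :
    ∫ r in Ioi (0 : ℝ), cexp (c * r) • T r (∫ r' in Ioi (0 : ℝ), cexp (c * r') • T r' w)
      = ∫ ρ in Ioi (0 : ℝ), ((ρ : ℂ) * cexp (c * ρ)) • T ρ w := by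
  have hw := (hTcont w).aestronglyMeasurable_restrict_Ioi
  have hwM : ∀ᵐ t ∂volume.restrict (Ioi (0 : ℝ)), ‖T t w‖ ≤ C * ‖w‖ := by
    filter_upwards [ae_restrict_mem measurableSet_Ioi] with t ht
    exact (T t).le_of_opNorm_le (hC t (le_of_lt ht)) w
  have hsg : ∀ r ∈ Ioi (0 : ℝ),
      cexp (c * r) • T r (∫ r' in Ioi (0 : ℝ), cexp (c * r') • T r' w)
        = ∫ r' in Ioi (0 : ℝ), cexp (c * ↑(r + r')) • T (r + r') w := by
    intro r hr
    rw [apply_setIntegral_smul_eq hTsg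
      ((integrableOn_exp_mul_complex_Ioi hc 0).smul_bdd _ hw hwM) (le_of_lt hr), ← integral_smul]
    refine setIntegral_congr_fun measurableSet_Ioi fun r' _ => ?_
    rw [smul_smul, ← Complex.exp_add, add_comm r' r]
    push_cast
    ring_nf
  rw [setIntegral_congr_fun measurableSet_Ioi hsg, integral_Ioi_integral_Ioi_comp_add
    (g := fun ρ => cexp (c * ρ) • T ρ w) ((Continuous.aestronglyMeasurable (by fun_prop)).smul hw)]
  · simp_rw [← Complex.coe_smul, smul_smul]
  · simp_rw [← Complex.coe_smul, smul_smul]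
    exact (integrableOn_Ioi_ofReal_mul_cexp hc).smul_bdd _ hw hwM

lemma resolvent_sq_apply_eq_iterated_integral [CompleteSpace X]
    (hTsg : ∀ s t : ℝ, 0 ≤ s → 0 ≤ t → T (s + t) = (T s).comp (T t))
    (hTcont : ∀ x : X, ContinuousOn (fun t => T t x) (Ici 0)) {C : ℝ}
    (hC : ∀ t : ℝ, 0 ≤ t → ‖T t‖ ≤ C) {b : ℝ → ℂ} (hb : IntegrableOn b (Ioi 0)) {ε : ℝ}
    (hε : 0 ≤ ε) (x : X) :
    -(∫ r in Ioi (0 : ℝ), cexp (((-1 - ε : ℝ) : ℂ) * r) •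
        T r (-(∫ r' in Ioi (0 : ℝ), cexp (((-1 - ε : ℝ) : ℂ) * r') •
          T r' (∫ t in Ioi (0 : ℝ), (b t * cexp (-((ε : ℂ) * t))) • T t x))))
      = ∫ u in Ioi (0 : ℝ), (b u * cexp (-(ε * u))) •
          ∫ τ in Ioi (0 : ℝ), ((τ : ℂ) * cexp (((-1 - ε : ℝ) : ℂ) * τ)) • T (τ + u) x := by
  have hc : ((-1 - ε : ℝ) : ℂ).re < 0 := by simp only [ofReal_re]; linarith
  have hxM : ∀ᵐ t ∂volume.restrict (Ioi (0 : ℝ)), ‖T t x‖ ≤ C * ‖x‖ := by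
    filter_upwards [ae_restrict_mem measurableSet_Ioi] with t ht
    exact (T t).le_of_opNorm_le (hC t (le_of_lt ht)) x
  have hφ : IntegrableOn (fun t : ℝ => b t * cexp (-((ε : ℂ) * t))) (Ioi 0) := by
    refine hb.mul_bdd (Continuous.aestronglyMeasurable (by fun_prop)) (c := 1) ?_
    filter_upwards [ae_restrict_mem measurableSet_Ioi] with t ht
    rw [Complex.norm_exp, Real.exp_le_one_iff]
    simpa using mul_nonneg hε (le_of_lt ht)
  simp_rw [map_neg, smul_neg, integral_neg, neg_neg]
  rw [setIntegral_cexp_smul_apply_setIntegral hTsg hTcont hC hc,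
    setIntegral_congr_fun measurableSet_Ioi fun ρ hρ => by
      rw [apply_setIntegral_smul_eq hTsg
        (hφ.smul_bdd _ (hTcont x).aestronglyMeasurable_restrict_Ioi hxM) (le_of_lt hρ)]]
  exact setIntegral_smul_setIntegral_smul_comp_add_swap (integrableOn_Ioi_ofReal_mul_cexp hc) hφ
    (hTcont x) fun t ht => (T t).le_of_opNorm_le (hC t ht) x

end Semigroup

/-- With the regularizer `e(z) = (1 + z)⁻²` (`μ = -1`) and `e(A+ε)` injective, the claim is the
identity `(e L_b)(A+ε) = e(A+ε) Γ(A+ε, b)` for an abscissa `β ∈ (0, ε)`, where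
`(e L_b)(A+ε) = (-1/2π) ∫_ℝ (e L_b)(β+is) R(β+is, A+ε) ds`,
`R(z, A+ε) = -∫₀^∞ e^{(z-ε)t} T_t dt` and `e(A+ε) = R(-1, A+ε)²`. -/
theorem stmt18_general {X : Type*} [NormedAddCommGroup X] [NormedSpace ℂ X] [CompleteSpace X]
    (T : ℝ → X →L[ℂ] X) (C : ℝ)
    (hTsg : ∀ s t : ℝ, 0 ≤ s → 0 ≤ t → T (s + t) = (T s).comp (T t))
    (hTcont : ∀ x : X, ContinuousOn (fun t => T t x) (Set.Ici 0))
    (hC : ∀ t : ℝ, 0 ≤ t → ‖T t‖ ≤ C)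
    (b : ℝ → ℂ) (hb : IntegrableOn b (Ioi 0))
    (ε β : ℝ) (hε : 0 < ε) (hβ : 0 < β) (hβε : β < ε) :
    ∀ x : X,
      ((-(2 * Real.pi)⁻¹ : ℝ) : ℂ) •
        (∫ s : ℝ,
          (((1 + ((β : ℂ) + Complex.I * s))⁻¹ ^ 2) *
            (∫ t in Ioi (0 : ℝ), b t * Complex.exp (-(t * ((β : ℂ) + Complex.I * s))))) •
          (-(∫ t in Ioi (0 : ℝ),
              Complex.exp ((((β : ℂ) + Complex.I * s) - (ε : ℂ)) * t) • T t x)))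
      = -(∫ r in Ioi (0 : ℝ), Complex.exp (((-1 - ε : ℝ) : ℂ) * r) •
          T r (-(∫ r' in Ioi (0 : ℝ), Complex.exp (((-1 - ε : ℝ) : ℂ) * r') •
            T r' (∫ t in Ioi (0 : ℝ),
              (b t * Complex.exp (-((ε : ℂ) * t))) • T t x)))) := by
  intro x
  rw [resolvent_sq_apply_eq_iterated_integral hTsg hTcont hC hb hε.le x,
    ← contour_integral_eq_iterated_integral hβ.le hβε (hTcont x).aestronglyMeasurable_restrict_Ioi
      (fun t ht => (T t).le_of_opNorm_le (hC t ht.le) x) hb]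
  simp_rw [smul_neg, integral_neg, ofReal_neg, neg_smul, smul_neg, neg_neg]

/-- Lemma 4.3 (compatibility): let `-A` generate a bounded `C₀`-semigroup `(T_t)` on a
Banach space `X`, `b ∈ L¹(ℝ₊)` and `ε > 0`.  Then `L_b(A+ε)`, defined by the half-plane
holomorphic functional calculus, equals the Hille–Phillips operator
`Γ(A+ε, b) = ∫₀^∞ b(t) e^{-εt} T_t dt`.

By definition of the half-plane calculus with regularizer `e(z) = (1+z)^{-2}`
(i.e. `e = e_{μ,2}` with `μ = -1`), and since `e(A+ε)` is injective, this equality is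
equivalent to the identity `(e L_b)(A+ε) = e(A+ε) ∘ Γ(A+ε, b)` (valid for every choice
of abscissa `β ∈ (0, ε)`), where
`(e L_b)(A+ε) = (-1/2π) ∫_ℝ (e L_b)(β+is) R(β+is, A+ε) ds`,
`R(z, A+ε) = -∫₀^∞ e^{(z-ε)t} T_t dt` and `e(A+ε) = R(-1, A+ε)²`. -/
theorem stmt18 {X : Type*} [NormedAddCommGroup X] [NormedSpace ℂ X] [CompleteSpace X]
    (T : ℝ → X →L[ℂ] X) (C : ℝ)
    (hT0 : T 0 = ContinuousLinearMap.id ℂ X)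
    (hTsg : ∀ s t : ℝ, 0 ≤ s → 0 ≤ t → T (s + t) = (T s).comp (T t))
    (hTcont : ∀ x : X, ContinuousOn (fun t => T t x) (Set.Ici 0))
    (hC : ∀ t : ℝ, 0 ≤ t → ‖T t‖ ≤ C)
    (b : ℝ → ℂ) (hb : IntegrableOn b (Ioi 0))
    (ε β : ℝ) (hε : 0 < ε) (hβ : 0 < β) (hβε : β < ε) :
    ∀ x : X,
      ((-(2 * Real.pi)⁻¹ : ℝ) : ℂ) •
        (∫ s : ℝ,
          (((1 + ((β : ℂ) + Complex.I * s))⁻¹ ^ 2) *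
            (∫ t in Ioi (0 : ℝ), b t * Complex.exp (-(t * ((β : ℂ) + Complex.I * s))))) •
          (-(∫ t in Ioi (0 : ℝ),
              Complex.exp ((((β : ℂ) + Complex.I * s) - (ε : ℂ)) * t) • T t x)))
      = -(∫ r in Ioi (0 : ℝ), Complex.exp (((-1 - ε : ℝ) : ℂ) * r) •
          T r (-(∫ r' in Ioi (0 : ℝ), Complex.exp (((-1 - ε : ℝ) : ℂ) * r') •
            T r' (∫ t in Ioi (0 : ℝ),
              (b t * Complex.exp (-((ε : ℂ) * t))) • T t x)))) :=
  stmt18_general T C hTsg hTcont hC b hb ε β hε hβ hβε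
end
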